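/- arXiv:1212.4604 — 2 statements merged into one kernel-verified Lean document; each statement's English description precedes it below -/
import Mathlib

section
/- Let R = k[h]/(h²) with h of degree 2, over a field k of characteristic 0. Then (R^{⊗n})^{S_n} has Hilbert series 1 + t² + t⁴ + ... + t^{2n}, i.e. it has one-dimensional graded pieces exactly in degrees 0, 2, 4, ..., 2n, matching the cohomology H*(Pⁿ_C; k) of complex projective n-space. -/
open Finset

lemma fin2_coe_ite (a : Fin 2) : (a : ℕ) = if a = 1 then 1 else 0 := by
  split <;> omega

lemma sum_eq_card (n : ℕ) (f : Fin n → Fin 2) :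
    ∑ i, (f i : ℕ) = (univ.filter fun i => f i = 1).card := by
  simp only [fin2_coe_ite]
  rw [Finset.sum_boole]
  simp

lemma fin2_eq_of_one_iff {a b : Fin 2} (h : a = 1 ↔ b = 1) : a = b := by
  fin_cases a <;> fin_cases b <;> simp_all

lemma exists_perm (n : ℕ) (f g : Fin n → Fin 2)
    (h : ∑ i, (f i : ℕ) = ∑ i, (g i : ℕ)) :
    ∃ σ : Equiv.Perm (Fin n), f ∘ σ = g := by
  classical
  have hcard : Fintype.card {i // g i = 1} = Fintype.card {i // f i = 1} := by
    simp only [Fintype.card_subtype]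
    rw [sum_eq_card, sum_eq_card] at h
    omega
  let e1 : {i // g i = 1} ≃ {i // f i = 1} := Fintype.equivOfCardEq hcard
  refine ⟨e1.extendSubtype, funext fun i => ?_⟩
  by_cases h : g i = 1
  · have := e1.extendSubtype_mem i h
    simp only [Function.comp_apply]
    rw [h]
    exact this
  · have := e1.extendSubtype_not_mem i h
    exact fin2_eq_of_one_iff (by simp [this, h])

lemma exists_fun_sum (n m : ℕ) (hmn : m ≤ n) :
    ∃ f : Fin n → Fin 2, ∑ i, (f i : ℕ) = m := by
  refine ⟨fun i => if (i : ℕ) < m then 1 else 0, ?_⟩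
  simp only [apply_ite (fun a : Fin 2 => (a : ℕ)), Fin.val_one, Fin.val_zero]
  rw [Fin.sum_univ_eq_sum_range (fun i => if i < m then 1 else 0)]
  rw [Finset.sum_boole]
  have : Finset.filter (fun i => i < m) (Finset.range n) = Finset.range m := by
    ext a; simp; omega
  simp [this]

lemma sum_le (n : ℕ) (f : Fin n → Fin 2) : ∑ i, (f i : ℕ) ≤ n := by
  calc ∑ i, (f i : ℕ) ≤ ∑ _i : Fin n, 1 :=
        Finset.sum_le_sum fun i _ => by omega
    _ = n := by simp

noncomputable section

/-- The degree-`d` piece of the `Sₙ`-invariant subspace of `R^{⊗n}` for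
`R = k[h]/(h²)` with `deg h = 2`. The tensor power is modelled by the vector space
with basis the squarefree monomials `∏ hᵢ^{f i}`, `f : Fin n → Fin 2`; the degree of
such a monomial is `2·Σ f i`, and `Sₙ` permutes the variables. -/
def invPiece (k : Type*) [Field k] (n d : ℕ) : Submodule k ((Fin n → Fin 2) → k) where
  carrier := {w | (∀ (σ : Equiv.Perm (Fin n)) (f : Fin n → Fin 2), w (f ∘ σ) = w f) ∧
    ∀ f : Fin n → Fin 2, 2 * (∑ i, (f i : ℕ)) ≠ d → w f = 0}
  add_mem' := by
    rintro a b ⟨ha1, ha2⟩ ⟨hb1, hb2⟩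
    exact ⟨fun σ f => by simp [ha1 σ f, hb1 σ f],
      fun f hf => by simp [ha2 f hf, hb2 f hf]⟩
  zero_mem' := ⟨fun _ _ => rfl, fun _ _ => rfl⟩
  smul_mem' := by
    rintro c a ⟨ha1, ha2⟩
    exact ⟨fun σ f => by simp [ha1 σ f], fun f hf => by simp [ha2 f hf]⟩

/-- For `R = k[h]/(h²)` with `h` of degree 2 over a field `k` of
characteristic 0, the `Sₙ`-invariants of `R^{⊗n}` have Hilbert series
`1 + t² + t⁴ + ... + t^{2n}`: the graded pieces are one-dimensional exactly in
degrees `0, 2, 4, ..., 2n` and zero otherwise, matching `H*(Pⁿ_ℂ; k)`. -/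
theorem hilbert_series_of_invariants
    (k : Type*) [Field k] [CharZero k] (n : ℕ) :
    ∀ d : ℕ, Module.finrank k (invPiece k n d) =
      if d % 2 = 0 ∧ d ≤ 2 * n then 1 else 0 := by
  intro d
  by_cases hd : d % 2 = 0 ∧ d ≤ 2 * n
  · rw [if_pos hd]
    obtain ⟨m, rfl⟩ : ∃ m, d = 2 * m := ⟨d / 2, by omega⟩
    have hmn : m ≤ n := by omega
    classical
    set χ : (Fin n → Fin 2) → k := fun f => if ∑ i, (f i : ℕ) = m then 1 else 0 with hχ
    have hspan : invPiece k n (2 * m) = Submodule.span k {χ} := by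
      apply le_antisymm
      · rintro w ⟨hw1, hw2⟩
        obtain ⟨f₀, hf₀⟩ := exists_fun_sum n m hmn
        refine Submodule.mem_span_singleton.mpr ⟨w f₀, funext fun f => ?_⟩
        simp only [Pi.smul_apply, smul_eq_mul, hχ]
        by_cases hf : ∑ i, (f i : ℕ) = m
        · obtain ⟨σ, hσ⟩ := exists_perm n f₀ f (hf₀.trans hf.symm)
          rw [if_pos hf, mul_one, ← hσ, hw1 σ f₀]
        · rw [if_neg hf, mul_zero]
          exact (hw2 f (by omega)).symm
      · rw [Submodule.span_singleton_le_iff_mem]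
        constructor
        · intro σ f
          simp only [hχ]
          congr 1
          simp only [eq_iff_iff]
          rw [show ∑ i, ((f ∘ σ) i : ℕ) = ∑ i, (f i : ℕ) from
            Fintype.sum_equiv σ _ _ fun i => rfl]
        · intro f hf
          simp only [hχ, if_neg (by omega : ¬ ∑ i, (f i : ℕ) = m)]
    rw [hspan]
    rw [finrank_span_singleton]
    obtain ⟨f₀, hf₀⟩ := exists_fun_sum n m hmn
    intro h0
    have := congrFun h0 f₀
    simp [hχ, hf₀] at this
  · rw [if_neg hd]
    have hbot : invPiece k n d = ⊥ := by
      rw [eq_bot_iff]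
      rintro w ⟨_, hw2⟩
      simp only [Submodule.mem_bot]
      funext f
      apply hw2
      have := sum_le n f
      omega
    rw [hbot, finrank_bot]

end
end

section
/- Let k have characteristic 0 and consider A = (k[h]/(h²))^{⊗n} with the S_n-action permuting factors. The S_n-invariant subspace of A is spanned by the elementary symmetric functions e₀, e₁, ..., e_n in the commuting square-zero variables h₁,...,h_n, and these satisfy h^m = m!·e_m where h = e₁. In particular the invariants form a commutative subalgebra generated by the single element h. -/
noncomputable section
open MvPolynomial

/-- The ideal generated by the squares `Xᵢ²`. -/
def sqIdeal (k : Type*) [CommRing k] (n : ℕ) : Ideal (MvPolynomial (Fin n) k) :=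
  Ideal.span (Set.range fun i : Fin n => (X i : MvPolynomial (Fin n) k) ^ 2)

/-- The model `k[x₁,...,xₙ]/(x₁²,...,xₙ²)` for the tensor power `(k[h]/(h²))^{⊗n}`. -/
abbrev SqZ (k : Type*) [CommRing k] (n : ℕ) := MvPolynomial (Fin n) k ⧸ sqIdeal k n

/-- The action of a permutation `σ ∈ Sₙ` on `SqZ k n`, permuting the variables. -/
def permA (k : Type*) [CommRing k] (n : ℕ) (σ : Equiv.Perm (Fin n)) :
    SqZ k n →ₐ[k] SqZ k n :=
  Ideal.Quotient.liftₐ (sqIdeal k n)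
    ((Ideal.Quotient.mkₐ k (sqIdeal k n)).comp (rename σ)) (by
      intro a ha
      have h2 : Ideal.map ((rename (σ : Fin n → Fin n) : MvPolynomial (Fin n) k →ₐ[k] MvPolynomial (Fin n) k) : MvPolynomial (Fin n) k →+* MvPolynomial (Fin n) k) (sqIdeal k n) ≤ sqIdeal k n := by
        rw [sqIdeal, Ideal.map_span]
        apply Ideal.span_le.mpr
        rintro _ ⟨_, ⟨i, rfl⟩, rfl⟩
        refine Ideal.subset_span ?_
        exact ⟨σ i, by simp⟩
      have hmem := h2 (Ideal.mem_map_of_mem _ ha)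
      show Ideal.Quotient.mk (sqIdeal k n) (rename (σ : Fin n → Fin n) a) = 0
      rw [Ideal.Quotient.eq_zero_iff_mem]
      exact hmem)

/-- The `Sₙ`-invariant subalgebra of `SqZ k n`. -/
def sqInvariants (k : Type*) [CommRing k] (n : ℕ) : Subalgebra k (SqZ k n) :=
  ⨅ σ : Equiv.Perm (Fin n), AlgHom.equalizer (permA k n σ) (AlgHom.id k (SqZ k n))

/-- The elementary symmetric function `e_m = Σ_{|T| = m} ∏_{i ∈ T} hᵢ` in the
square-zero variables. -/
def eSym (k : Type*) [CommRing k] (n m : ℕ) : SqZ k n :=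
  Ideal.Quotient.mk (sqIdeal k n)
    (∑ T ∈ Finset.powersetCard m (Finset.univ : Finset (Fin n)), ∏ i ∈ T, X i)

section T1
open MvPolynomial Finset
namespace Aux

variable {k : Type*} [CommRing k] {n : ℕ}

/-- The exponent finsupp of the squarefree monomial with support `T`. -/
def ind (T : Finset (Fin n)) : Fin n →₀ ℕ := ∑ i ∈ T, Finsupp.single i 1

lemma ind_apply (T : Finset (Fin n)) (i : Fin n) : ind T i = if i ∈ T then 1 else 0 := by
  classical
  simp only [ind, Finset.sum_apply', Finsupp.single_apply]
  simp [Finset.sum_ite_eq T i (fun _ => 1)]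

lemma ind_support (T : Finset (Fin n)) : (ind T).support = T := by
  ext i; simp [Finsupp.mem_support_iff, ind_apply]

lemma ind_injective : Function.Injective (ind (n := n)) := fun T S h => by
  rw [← ind_support T, ← ind_support S, h]

lemma ind_le_one (T : Finset (Fin n)) (i : Fin n) : ind T i ≤ 1 := by
  rw [ind_apply]; split <;> simp

lemma ind_support_eq {d : Fin n →₀ ℕ} (hd : ∀ i, d i ≤ 1) : ind d.support = d := by
  ext i
  rw [ind_apply]
  by_cases h : i ∈ d.support
  · have : d i ≠ 0 := Finsupp.mem_support_iff.mp h
    have := hd i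
    simp [h]; omega
  · simp [h, Finsupp.notMem_support_iff.mp h]

lemma prod_X_eq (T : Finset (Fin n)) :
    (∏ i ∈ T, X i : MvPolynomial (Fin n) k) = monomial (ind T) 1 := by
  rw [ind, monomial_sum_one]
  rfl

lemma coeff_ind_esymm (S : Finset (Fin n)) (m : ℕ) :
    coeff (ind S) (esymm (Fin n) k m) = if S.card = m then 1 else 0 := by
  classical
  rw [esymm_eq_sum_monomial]
  rw [coeff_sum]
  simp only [coeff_monomial]
  have : ∀ T ∈ powersetCard m (univ : Finset (Fin n)),
      (if (∑ i ∈ T, Finsupp.single i 1) = ind S then (1:k) else 0) =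
      if T = S then 1 else 0 := by
    intro T _
    congr 1
    simp only [eq_iff_iff]
    constructor
    · intro h; exact ind_injective h
    · intro h; rw [h]; rfl
  rw [Finset.sum_congr rfl this, Finset.sum_ite_eq' (powersetCard m univ) S (fun _ => (1:k))]
  simp [Finset.mem_powersetCard_univ]

end Aux
end T1

section T2
open MvPolynomial Finset
namespace Aux
variable {k : Type*} [CommRing k] {n : ℕ}

lemma coeff_eq_zero_of_mem {P : MvPolynomial (Fin n) k} (hP : P ∈ sqIdeal k n)
    {d : Fin n →₀ ℕ} (hd : ∀ i, d i ≤ 1) : coeff d P = 0 := by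
  classical
  induction hP using Submodule.span_induction generalizing d with
  | mem x hx =>
    obtain ⟨i, rfl⟩ := hx
    show coeff d (X i ^ 2) = 0
    rw [X_pow_eq_monomial, coeff_monomial]
    have : Finsupp.single i 2 ≠ d := by
      intro h
      have := hd i
      rw [← h] at this
      simp at this
    simp [this]
  | zero => simp
  | add x y _ _ hx hy => rw [coeff_add, hx hd, hy hd, add_zero]
  | smul a x _ hx =>
    rw [smul_eq_mul, coeff_mul]
    apply Finset.sum_eq_zero
    rintro ⟨u, v⟩ huv
    have huv' : u + v = d := Finset.HasAntidiagonal.mem_antidiagonal.mp huv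
    have hv : ∀ i, v i ≤ 1 := by
      intro i
      have := hd i
      have : u i + v i = d i := by rw [← huv']; rfl
      omega
    rw [hx hv, mul_zero]

lemma monomial_mem {d : Fin n →₀ ℕ} (hd : ∃ i, 2 ≤ d i) (c : k) :
    monomial d c ∈ sqIdeal k n := by
  obtain ⟨i, hi⟩ := hd
  have hle : Finsupp.single i 2 ≤ d := Finsupp.single_le_iff.mpr hi
  have : monomial d c = monomial (d - Finsupp.single i 2) c * X i ^ 2 := by
    rw [X_pow_eq_monomial, monomial_mul, mul_one, tsub_add_cancel_of_le hle]
  rw [this]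
  exact Ideal.mul_mem_left _ _ (Ideal.subset_span ⟨i, rfl⟩)

lemma mem_of_coeff_eq_zero {P : MvPolynomial (Fin n) k}
    (h : ∀ d : Fin n →₀ ℕ, (∀ i, d i ≤ 1) → coeff d P = 0) : P ∈ sqIdeal k n := by
  classical
  rw [P.as_sum]
  apply Ideal.sum_mem
  intro d hd
  apply monomial_mem
  by_contra hc
  push_neg at hc
  have : ∀ i, d i ≤ 1 := fun i => by have := hc i; omega
  exact (Finsupp.mem_support_iff.mp hd) (h d this)

lemma mk_eq_mk_iff {P Q : MvPolynomial (Fin n) k} :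
    Ideal.Quotient.mk (sqIdeal k n) P = Ideal.Quotient.mk (sqIdeal k n) Q ↔
      P - Q ∈ sqIdeal k n :=
  Ideal.Quotient.mk_eq_mk_iff_sub_mem P Q

end Aux
end T2

section T3
open MvPolynomial Finset
namespace Aux
variable {k : Type*} [CommRing k] {n : ℕ}

lemma exists_perm {T T' : Finset (Fin n)} (h : T.card = T'.card) :
    ∃ σ : Equiv.Perm (Fin n), ∀ i, i ∈ T ↔ σ i ∈ T' := by
  classical
  have h1 : Fintype.card {x : Fin n // x ∈ T} = Fintype.card {x : Fin n // x ∈ T'} := by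
    simpa [Fintype.card_coe] using h
  have h2 : Fintype.card {x : Fin n // ¬ x ∈ T} = Fintype.card {x : Fin n // ¬ x ∈ T'} := by
    rw [Fintype.card_subtype_compl, Fintype.card_subtype_compl, h1]
  refine ⟨Equiv.subtypeCongr (Fintype.equivOfCardEq h1) (Fintype.equivOfCardEq h2), ?_⟩
  intro i
  by_cases hi : i ∈ T
  · simp only [hi, true_iff]
    have : Equiv.subtypeCongr (Fintype.equivOfCardEq h1) (Fintype.equivOfCardEq h2) i
        = ↑(Fintype.equivOfCardEq h1 ⟨i, hi⟩) := by
      simp [Equiv.subtypeCongr, hi]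
    rw [this]
    exact (Fintype.equivOfCardEq h1 ⟨i, hi⟩).2
  · simp only [hi, false_iff]
    have : Equiv.subtypeCongr (Fintype.equivOfCardEq h1) (Fintype.equivOfCardEq h2) i
        = ↑(Fintype.equivOfCardEq h2 ⟨i, hi⟩) := by
      simp [Equiv.subtypeCongr, hi]
    rw [this]
    exact (Fintype.equivOfCardEq h2 ⟨i, hi⟩).2

lemma image_perm_eq {T T' : Finset (Fin n)} (σ : Equiv.Perm (Fin n))
    (hσ : ∀ i, i ∈ T ↔ σ i ∈ T') : T.image σ = T' := by
  classical
  ext j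
  simp only [Finset.mem_image]
  constructor
  · rintro ⟨i, hi, rfl⟩; exact (hσ i).mp hi
  · intro hj
    exact ⟨σ.symm j, (hσ _).mpr (by simpa using hj), by simp⟩

lemma mapDomain_ind (σ : Equiv.Perm (Fin n)) (T : Finset (Fin n)) :
    Finsupp.mapDomain σ (ind T) = ind (T.image σ) := by
  classical
  rw [ind, Finsupp.mapDomain_finset_sum]
  simp only [Finsupp.mapDomain_single]
  rw [ind, Finset.sum_image (fun a _ b _ h => σ.injective h)]

lemma coeff_ind_rename (σ : Equiv.Perm (Fin n)) (T : Finset (Fin n))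
    (P : MvPolynomial (Fin n) k) :
    coeff (ind (T.image σ)) (rename σ P) = coeff (ind T) P := by
  rw [← mapDomain_ind]
  exact coeff_rename_mapDomain σ σ.injective P (ind T)

end Aux
end T3

section T4
open MvPolynomial Finset
namespace Aux
variable {k : Type*} [CommRing k] {n : ℕ}

lemma eSym_eq (m : ℕ) : eSym k n m = Ideal.Quotient.mk (sqIdeal k n) (esymm (Fin n) k m) := rfl

lemma permA_mk (σ : Equiv.Perm (Fin n)) (P : MvPolynomial (Fin n) k) :
    permA k n σ (Ideal.Quotient.mk (sqIdeal k n) P) =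
      Ideal.Quotient.mk (sqIdeal k n) (rename σ P) := rfl

lemma mem_sqInvariants_iff {x : SqZ k n} :
    x ∈ sqInvariants k n ↔ ∀ σ : Equiv.Perm (Fin n), permA k n σ x = x := by
  simp [sqInvariants, Algebra.mem_iInf, AlgHom.mem_equalizer]

lemma eSym_mem_invariants (m : ℕ) : eSym k n m ∈ sqInvariants k n := by
  rw [mem_sqInvariants_iff]
  intro σ
  rw [eSym_eq, permA_mk, rename_esymm]

end Aux
end T4

section T5
open MvPolynomial Finset
namespace Aux
variable {k : Type*} [CommRing k] {n : ℕ}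

lemma key_sum (m : ℕ) :
    ∑ T ∈ powersetCard m (univ : Finset (Fin n)), ∑ i ∈ Tᶜ,
        ∏ j ∈ insert i T, (X j : MvPolynomial (Fin n) k)
      = (m + 1) • esymm (Fin n) k (m + 1) := by
  classical
  rw [esymm, Finset.smul_sum]
  have hcard : ∀ S ∈ powersetCard (m+1) (univ : Finset (Fin n)),
      (m + 1) • (∏ j ∈ S, (X j : MvPolynomial (Fin n) k)) =
      ∑ i ∈ S, ∏ j ∈ S, (X j : MvPolynomial (Fin n) k) := by
    intro S hS
    rw [Finset.sum_const, (Finset.mem_powersetCard_univ).mp hS]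
  rw [Finset.sum_congr rfl hcard]
  rw [Finset.sum_sigma', Finset.sum_sigma']
  refine Finset.sum_nbij' (fun p => ⟨insert p.2 p.1, p.2⟩) (fun q => ⟨q.1.erase q.2, q.2⟩)
    ?_ ?_ ?_ ?_ ?_
  · rintro ⟨T, i⟩ hp
    simp only [Finset.mem_sigma, Finset.mem_powersetCard_univ, Finset.mem_compl] at hp ⊢
    refine ⟨?_, Finset.mem_insert_self _ _⟩
    rw [Finset.card_insert_of_notMem hp.2, hp.1]
  · rintro ⟨S, i⟩ hq
    simp only [Finset.mem_sigma, Finset.mem_powersetCard_univ, Finset.mem_compl] at hq ⊢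
    refine ⟨?_, Finset.notMem_erase _ _⟩
    rw [Finset.card_erase_of_mem hq.2, hq.1]
    omega
  · rintro ⟨T, i⟩ hp
    simp only [Finset.mem_sigma, Finset.mem_powersetCard_univ, Finset.mem_compl] at hp
    simp only [Sigma.mk.inj_iff, heq_eq_eq, and_true]
    rw [Finset.erase_insert hp.2]
  · rintro ⟨S, i⟩ hq
    simp only [Finset.mem_sigma, Finset.mem_powersetCard_univ, Finset.mem_compl] at hq
    simp only [Sigma.mk.inj_iff, heq_eq_eq, and_true]
    rw [Finset.insert_erase hq.2]
  · rintro ⟨T, i⟩ hp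
    rfl

lemma esymm_mul_esymm (m : ℕ) :
    ∃ Q ∈ sqIdeal k n,
      esymm (Fin n) k 1 * esymm (Fin n) k m =
        (m + 1) • esymm (Fin n) k (m + 1) + Q := by
  classical
  have expand : esymm (Fin n) k 1 * esymm (Fin n) k m =
      ∑ T ∈ powersetCard m (univ : Finset (Fin n)),
        (∑ i ∈ T, X i * ∏ j ∈ T, X j) +
      ∑ T ∈ powersetCard m (univ : Finset (Fin n)),
        (∑ i ∈ Tᶜ, X i * ∏ j ∈ T, X j) := by
    rw [esymm_one, esymm, Finset.sum_mul_sum, Finset.sum_comm, ← Finset.sum_add_distrib]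
    apply Finset.sum_congr rfl
    intro T _
    exact (Finset.sum_add_sum_compl T (fun i => X i * ∏ j ∈ T, X j)).symm
  refine ⟨∑ T ∈ powersetCard m (univ : Finset (Fin n)), (∑ i ∈ T, X i * ∏ j ∈ T, X j), ?_, ?_⟩
  · apply Ideal.sum_mem
    intro T _
    apply Ideal.sum_mem
    intro i hi
    have : (X i : MvPolynomial (Fin n) k) * ∏ j ∈ T, X j =
        (∏ j ∈ T.erase i, X j) * X i ^ 2 := by
      rw [← Finset.mul_prod_erase T X hi]; ring
    rw [this]
    exact Ideal.mul_mem_left _ _ (Ideal.subset_span ⟨i, rfl⟩)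
  · rw [expand, ← key_sum m, add_comm]
    congr 1
    apply Finset.sum_congr rfl
    intro T hT
    apply Finset.sum_congr rfl
    intro i hi
    rw [Finset.prod_insert (Finset.mem_compl.mp hi)]

end Aux
end T5

section T6
open MvPolynomial Finset
namespace Aux
variable {k : Type*} [CommRing k] {n : ℕ}

lemma eSym_one_mul (m : ℕ) :
    eSym k n 1 * eSym k n m = (m + 1) • eSym k n (m + 1) := by
  obtain ⟨Q, hQ, hEq⟩ := esymm_mul_esymm (k := k) (n := n) m
  rw [eSym_eq, eSym_eq, eSym_eq, ← map_mul, hEq, map_add,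
    (Ideal.Quotient.eq_zero_iff_mem).mpr hQ, add_zero, map_nsmul]

lemma eSym_pow (m : ℕ) : (eSym k n 1) ^ m = m.factorial • eSym k n m := by
  induction m with
  | zero =>
    simp only [pow_zero, Nat.factorial_zero, one_smul, eSym_eq, esymm_zero, map_one]
  | succ m ih =>
    rw [pow_succ, ih, smul_mul_assoc, mul_comm, eSym_one_mul, smul_smul,
      Nat.factorial_succ, Nat.mul_comm]

lemma eSym_succ_n : eSym k n (n + 1) = 0 := by
  rw [eSym_eq, esymm]
  rw [Finset.powersetCard_eq_empty.mpr (by simp)]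
  simp

end Aux
end T6

section T7
open MvPolynomial Finset
namespace Aux
variable {k : Type*} [CommRing k] {n : ℕ}

def stdSet (n m : ℕ) (h : m ≤ n) : Finset (Fin n) :=
  (Finset.range m).attachFin (fun a ha => lt_of_lt_of_le (Finset.mem_range.mp ha) h)

lemma stdSet_card (m : ℕ) (h : m ≤ n) : (stdSet n m h).card = m := by
  rw [stdSet, Finset.card_attachFin, Finset.card_range]

lemma mk_smul (c : k) (q : MvPolynomial (Fin n) k) :
    Ideal.Quotient.mk (sqIdeal k n) (c • q) = c • Ideal.Quotient.mk (sqIdeal k n) q := by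
  rw [← Ideal.Quotient.mkₐ_eq_mk k, map_smul]

lemma card_le (T : Finset (Fin n)) : T.card ≤ n := by
  simpa using Finset.card_le_univ T

lemma invariant_rep {x : SqZ k n} (hx : x ∈ sqInvariants k n) :
    ∃ γ : ℕ → k, x = ∑ m ∈ Finset.range (n + 1), γ m • eSym k n m := by
  classical
  obtain ⟨P, rfl⟩ := Ideal.Quotient.mk_surjective x
  have hsymm : ∀ (T T' : Finset (Fin n)), T.card = T'.card →
      coeff (ind T) P = coeff (ind T') P := by
    intro T T' h
    obtain ⟨σ, hσ⟩ := exists_perm h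
    have h1 : permA k n σ (Ideal.Quotient.mk (sqIdeal k n) P) =
        Ideal.Quotient.mk (sqIdeal k n) P := mem_sqInvariants_iff.mp hx σ
    rw [permA_mk] at h1
    have h2 := mk_eq_mk_iff.mp h1
    have h3 := coeff_eq_zero_of_mem h2 (ind_le_one T')
    rw [coeff_sub, sub_eq_zero] at h3
    rw [← h3, ← image_perm_eq σ hσ, coeff_ind_rename]
  refine ⟨fun m => if h : m ≤ n then coeff (ind (stdSet n m h)) P else 0, ?_⟩
  have hγ : ∀ T : Finset (Fin n),
      (if h : T.card ≤ n then coeff (ind (stdSet n T.card h)) P else 0) =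
        coeff (ind T) P := by
    intro T
    rw [dif_pos (card_le T)]
    exact hsymm _ _ ((stdSet_card T.card (card_le T)).trans rfl)
  have key : ∑ m ∈ Finset.range (n + 1),
      (if h : m ≤ n then coeff (ind (stdSet n m h)) P else 0) • eSym k n m =
      Ideal.Quotient.mk (sqIdeal k n)
        (∑ m ∈ Finset.range (n + 1),
          (if h : m ≤ n then coeff (ind (stdSet n m h)) P else 0) • esymm (Fin n) k m) := by
    rw [map_sum]
    exact Finset.sum_congr rfl fun m _ => by rw [mk_smul, eSym_eq]
  rw [key, mk_eq_mk_iff]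
  apply mem_of_coeff_eq_zero
  intro d hd
  rw [coeff_sub]
  have hT : d = ind d.support := (ind_support_eq hd).symm
  rw [coeff_sum]
  have hc : ∀ m ∈ Finset.range (n + 1),
      coeff d ((if h : m ≤ n then coeff (ind (stdSet n m h)) P else 0) • esymm (Fin n) k m) =
      (if m = d.support.card then
        (if h : m ≤ n then coeff (ind (stdSet n m h)) P else 0) else 0) := by
    intro m _
    have hce : coeff d (esymm (Fin n) k m) = if d.support.card = m then 1 else 0 := by
      conv_lhs => rw [hT]
      rw [coeff_ind_esymm]
    rw [MvPolynomial.coeff_smul, hce, smul_eq_mul]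
    by_cases hm : d.support.card = m
    · rw [if_pos hm, if_pos hm.symm, mul_one]
    · rw [if_neg hm, if_neg (fun h => hm h.symm), mul_zero]
  rw [Finset.sum_congr rfl hc,
    Finset.sum_ite_eq' (Finset.range (n + 1)) d.support.card]
  rw [if_pos (Finset.mem_range.mpr (Nat.lt_succ_of_le (card_le _)))]
  rw [hγ d.support]
  nth_rewrite 1 [hT]
  rw [sub_self]

end Aux
end T7

open Finset Aux in
/-- Over a field `k` of characteristic 0, in
`A = (k[h]/(h²))^{⊗n}` (modelled by `k[x₁,...,xₙ]/(xᵢ²)`) with `Sₙ` permuting the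
factors, the `Sₙ`-invariants have the elementary symmetric functions `e₀, ..., eₙ` as
a `k`-basis, `(e₁)^m = m!·e_m` for `0 ≤ m ≤ n` and `(e₁)^{n+1} = 0`; in particular
the invariants form a commutative subalgebra generated by the single element
`h = e₁`. -/
theorem invariants_spanned_by_elementary_symmetric
    (k : Type*) [Field k] [CharZero k] (n : ℕ) :
    LinearIndependent k (fun m : Fin (n + 1) => eSym k n m) ∧
    Subalgebra.toSubmodule (sqInvariants k n) =
      Submodule.span k (Set.range fun m : Fin (n + 1) => eSym k n m) ∧
    (∀ m : ℕ, m ≤ n → (eSym k n 1) ^ m = (Nat.factorial m) • eSym k n m) ∧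
    (eSym k n 1) ^ (n + 1) = 0 ∧
    sqInvariants k n = Algebra.adjoin k {eSym k n 1} := by
  classical
  refine ⟨?_, ?_, fun m _ => eSym_pow m, ?_, ?_⟩
  · rw [Fintype.linearIndependent_iff]
    intro g hg m
    have hmk : ∑ m' : Fin (n + 1), g m' • eSym k n (m' : ℕ) =
        Ideal.Quotient.mk (sqIdeal k n)
          (∑ m' : Fin (n + 1), g m' • esymm (Fin n) k (m' : ℕ)) := by
      rw [map_sum]
      exact Finset.sum_congr rfl fun m' _ => by rw [mk_smul, eSym_eq]
    rw [hmk] at hg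
    have hmem := Ideal.Quotient.eq_zero_iff_mem.mp hg
    have hm : (m : ℕ) ≤ n := Nat.lt_succ_iff.mp m.isLt
    have h0 := coeff_eq_zero_of_mem hmem (ind_le_one (stdSet n m hm))
    rw [coeff_sum] at h0
    have hc : ∀ m' ∈ (Finset.univ : Finset (Fin (n + 1))),
        coeff (ind (stdSet n m hm)) (g m' • esymm (Fin n) k (m' : ℕ)) =
          if m' = m then g m' else 0 := by
      intro m' _
      rw [MvPolynomial.coeff_smul, coeff_ind_esymm, smul_eq_mul, stdSet_card]
      by_cases h : m' = m
      · rw [if_pos h, if_pos (by rw [h]), mul_one]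
      · rw [if_neg h, if_neg (fun hh => h (Fin.ext hh.symm)), mul_zero]
    rw [Finset.sum_congr rfl hc, Finset.sum_ite_eq' Finset.univ m g,
      if_pos (Finset.mem_univ m)] at h0
    exact h0
  · apply le_antisymm
    · intro x hx
      obtain ⟨γ, rfl⟩ := invariant_rep hx
      rw [← Fin.sum_univ_eq_sum_range (fun m => γ m • eSym k n m) (n + 1)]
      exact Submodule.sum_mem _ fun m _ =>
        Submodule.smul_mem _ _ (Submodule.subset_span ⟨m, rfl⟩)
    · rw [Submodule.span_le]
      rintro _ ⟨m, rfl⟩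
      exact eSym_mem_invariants (m : ℕ)
  · rw [eSym_pow (n + 1), eSym_succ_n, smul_zero]
  · apply le_antisymm
    · intro x hx
      obtain ⟨γ, rfl⟩ := invariant_rep hx
      apply Subalgebra.sum_mem
      intro m hm
      apply Subalgebra.smul_mem
      have hfac : ((m.factorial : k)) ≠ 0 := Nat.cast_ne_zero.mpr m.factorial_ne_zero
      have heq : eSym k n m = ((m.factorial : k))⁻¹ • (eSym k n 1) ^ m := by
        rw [eSym_pow m, ← Nat.cast_smul_eq_nsmul k, ← smul_assoc, smul_eq_mul,
          inv_mul_cancel₀ hfac, one_smul]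
      rw [heq]
      exact Subalgebra.smul_mem _ (Subalgebra.pow_mem _ (Algebra.subset_adjoin (Set.mem_singleton _)) m) _
    · exact Algebra.adjoin_le (Set.singleton_subset_iff.mpr (eSym_mem_invariants 1))

end
end
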